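/- The hop-distance matrix of the odd cycle C_{2k+1} has full rank 2k+1 over the reals. -/

import Mathlib

namespace OddHDM

open Fin.CommRing

def hop (k : ℕ) (i j : Fin (2*k+1)) : ℕ :=
  min ((i : ℤ) - (j : ℤ)).natAbs ((2*k+1) - ((i : ℤ) - (j : ℤ)).natAbs)

def prof (k : ℕ) (u : Fin (2*k+1)) : ℕ := min (u : ℕ) ((2*k+1) - (u : ℕ))

lemma modsmall (a m : ℕ) (h : a < 2*m) : a % m = if a < m then a else a - m := by
  split_ifs with h'
  · exact Nat.mod_eq_of_lt h'
  · rw [Nat.mod_eq_sub_mod (by omega), Nat.mod_eq_of_lt (by omega)]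

lemma kbar_val (k : ℕ) (hk : 1 ≤ k) : ((k : Fin (2*k+1)) : ℕ) = k := by
  rw [Fin.val_natCast]; exact Nat.mod_eq_of_lt (by omega)

/-- `hop` only depends on `i - j` in `Fin (2k+1)`. -/
lemma hop_eq (k : ℕ) (i j : Fin (2*k+1)) : hop k i j = prof k (i - j) := by
  have hi := i.isLt
  have hj := j.isLt
  have hu : ((i - j : Fin (2*k+1)) : ℕ)
      = if j.val ≤ i.val then i.val - j.val else i.val + (2*k+1) - j.val := by
    simp only [Fin.sub_def]
    rw [modsmall _ _ (by omega)]
    split_ifs <;> omega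
  unfold hop prof
  rw [hu]
  split_ifs <;> omega

/-- second difference of the single-variable hop profile -/
lemma profile_second (k : ℕ) (hk : 1 ≤ k) (u : Fin (2*k+1)) :
    (prof k (u + 1) : ℤ) + (prof k (u - 1) : ℤ) - 2 * (prof k u : ℤ)
      = (if u = 0 then 2 else 0) - (if u = (k : Fin (2*k+1)) then 1 else 0)
        - (if u = (k : Fin (2*k+1)) + 1 then 1 else 0) := by
  have hu := u.isLt
  have o1 : 1 % (2*k+1) = 1 := Nat.mod_eq_of_lt (by omega)
  have h1 : ((u + 1 : Fin (2*k+1)) : ℕ) = if u.val + 1 = 2*k+1 then 0 else u.val + 1 := by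
    rw [Fin.val_add, Fin.val_one', o1, modsmall _ _ (by omega)]
    split_ifs <;> omega
  have h2 : ((u - 1 : Fin (2*k+1)) : ℕ) = if u.val = 0 then 2*k else u.val - 1 := by
    simp only [Fin.sub_def, Fin.val_one', o1]
    rw [modsmall _ _ (by omega)]
    split_ifs <;> omega
  have e0 : (u = 0) ↔ (u.val = 0) := by
    rw [Fin.ext_iff]; simp
  have ek : (u = (k : Fin (2*k+1))) ↔ (u.val = k) := by
    rw [Fin.ext_iff, kbar_val k hk]
  have ek1 : (u = (k : Fin (2*k+1)) + 1) ↔ (u.val = k + 1) := by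
    rw [Fin.ext_iff, Fin.val_add, kbar_val k hk, Fin.val_one', o1,
      Nat.mod_eq_of_lt (by omega)]
  simp only [e0, ek, ek1]
  unfold prof
  split_ifs at h1 h2 ⊢ <;> omega

lemma hop_second (k : ℕ) (hk : 1 ≤ k) (i j : Fin (2*k+1)) :
    (hop k (i+1) j : ℤ) + hop k (i-1) j - 2 * hop k i j
      = (if j = i then 2 else 0) - (if j = i - (k : Fin (2*k+1)) then 1 else 0)
        - (if j = i - (k : Fin (2*k+1)) - 1 then 1 else 0) := by
  have e1 : i + 1 - j = (i - j) + 1 := by ring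
  have e2 : i - 1 - j = (i - j) - 1 := by ring
  have gen : ∀ c : Fin (2*k+1), (j = i - c) ↔ (i - j = c) := by
    intro c
    constructor
    · rintro rfl; exact sub_sub_cancel i c
    · rintro rfl; exact (sub_sub_cancel i j).symm
  have c0 : (j = i) ↔ (i - j = 0) := by
    constructor
    · rintro rfl; exact sub_self _
    · intro h; exact (sub_eq_zero.mp h).symm
  have ck : (j = i - (k : Fin (2*k+1))) ↔ (i - j = (k : Fin (2*k+1))) := gen _
  have ck1 : (j = i - (k : Fin (2*k+1)) - 1) ↔ (i - j = (k : Fin (2*k+1)) + 1) := by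
    rw [sub_sub]; exact gen _
  rw [hop_eq, hop_eq, hop_eq, e1, e2]
  simp only [c0, ck, ck1]
  exact profile_second k hk (i - j)

/-- casting the second-difference identity to `ℝ` -/
lemma hop_second_real (k : ℕ) (hk : 1 ≤ k) (i j : Fin (2*k+1)) :
    (hop k (i+1) j : ℝ) + hop k (i-1) j - 2 * hop k i j
      = (if j = i then 2 else 0) - (if j = i - (k : Fin (2*k+1)) then 1 else 0)
        - (if j = i - (k : Fin (2*k+1)) - 1 then 1 else 0) := by
  have h := hop_second k hk i j
  have h2 := congrArg (fun z : ℤ => (z : ℝ)) h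
  push_cast at h2
  convert h2 using 2 <;> simp [apply_ite]

open Finset in
/-- the hop-distance matrix has trivial kernel -/
lemma hop_kernel (k : ℕ) (hk : 1 ≤ k) (x : Fin (2*k+1) → ℝ)
    (hx : ∀ i, ∑ j, (hop k i j : ℝ) * x j = 0) : x = 0 := by
  set kb : Fin (2*k+1) := (k : Fin (2*k+1)) with hkb
  have hstep : ∀ i : Fin (2*k+1), 2 * x i = x (i - kb) + x (i - kb - 1) := by
    intro i
    have hsum : ∑ j, ((hop k (i+1) j : ℝ) + hop k (i-1) j - 2 * hop k i j) * x j = 0 := by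
      have : ∑ j, ((hop k (i+1) j : ℝ) + hop k (i-1) j - 2 * hop k i j) * x j
          = (∑ j, (hop k (i+1) j : ℝ) * x j) + (∑ j, (hop k (i-1) j : ℝ) * x j)
            - 2 * ∑ j, (hop k i j : ℝ) * x j := by
        rw [Finset.mul_sum, ← Finset.sum_add_distrib, ← Finset.sum_sub_distrib]
        congr 1; ext j; ring
      rw [this, hx, hx, hx]; ring
    have hsum2 : ∑ j, ((hop k (i+1) j : ℝ) + hop k (i-1) j - 2 * hop k i j) * x j
        = 2 * x i - x (i - kb) - x (i - kb - 1) := by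
      have : ∀ j, ((hop k (i+1) j : ℝ) + hop k (i-1) j - 2 * hop k i j) * x j
          = (if j = i then 2 * x j else 0) - (if j = i - kb then x j else 0)
            - (if j = i - kb - 1 then x j else 0) := by
        intro j
        rw [hop_second_real k hk i j]
        split_ifs <;> ring
      simp_rw [this]
      rw [Finset.sum_sub_distrib, Finset.sum_sub_distrib,
        Finset.sum_ite_eq' univ i, Finset.sum_ite_eq' univ (i - kb),
        Finset.sum_ite_eq' univ (i - kb - 1)]
      simp
    rw [hsum2] at hsum
    linarith
  obtain ⟨i0, _, hi0⟩ := Finset.exists_max_image Finset.univ x ⟨0, Finset.mem_univ 0⟩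
  set M := x i0 with hM
  have hSstep : ∀ i : Fin (2*k+1), x i = M → x (i - kb) = M ∧ x (i - kb - 1) = M := by
    intro i hiM
    have h1 := hi0 (i - kb) (Finset.mem_univ _)
    have h2 := hi0 (i - kb - 1) (Finset.mem_univ _)
    have := hstep i
    constructor <;> linarith [hiM ▸ this]
  have honesub : (((2*k+2 : ℕ)) : Fin (2*k+1)) = 1 := by
    apply Fin.ext
    rw [Fin.val_natCast, Fin.val_one', show 2*k+2 = (2*k+1) + 1 from by ring,
      Nat.add_mod_left]
  have hsub1 : ∀ i : Fin (2*k+1), x i = M → x (i - 1) = M := by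
    intro i hiM
    have s1 := (hSstep i hiM).2
    have s2 := (hSstep _ s1).2
    have h2k2 : (kb + 1) + (kb + 1) = 1 := by
      rw [hkb, show ((k : Fin (2*k+1)) + 1) + ((k : Fin (2*k+1)) + 1)
        = ((2*k+2 : ℕ) : Fin (2*k+1)) from by push_cast; ring, honesub]
    have : i - kb - 1 - kb - 1 = i - ((kb + 1) + (kb + 1)) := by ring
    rw [this, h2k2] at s2
    exact s2
  have hall : ∀ m : ℕ, x (i0 - (m : Fin (2*k+1))) = M := by
    intro m
    induction m with
    | zero => simpa using hM.symm
    | succ m ih =>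
      have : i0 - ((m+1 : ℕ) : Fin (2*k+1)) = (i0 - (m : Fin (2*k+1))) - 1 := by
        push_cast; ring
      rw [this]
      exact hsub1 _ ih
  have hconst : ∀ j : Fin (2*k+1), x j = M := by
    intro j
    have := hall ((i0 - j : Fin (2*k+1)) : ℕ)
    rwa [Fin.cast_val_eq_self, sub_sub_cancel] at this
  have hrow0 := hx 0
  have hposterm : (0:ℝ) < ∑ j, (hop k 0 j : ℝ) := by
    apply Finset.sum_pos' (fun j _ => by positivity)
    refine ⟨1, Finset.mem_univ _, ?_⟩
    have h1 : ((1 : Fin (2*k+1)) : ℤ) = 1 := by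
      have : ((1 : Fin (2*k+1)) : ℕ) = 1 := by
        rw [Fin.val_one']; exact Nat.mod_eq_of_lt (by omega)
      omega
    have h0 : ((0 : Fin (2*k+1)) : ℤ) = 0 := by simp
    have : hop k 0 1 = 1 := by
      unfold hop
      rw [h0, h1]
      simp only [zero_sub]
      norm_num
      omega
    rw [this]
    norm_num
  have hM0 : M = 0 := by
    by_contra hne
    have : ∑ j, (hop k 0 j : ℝ) * x j = (∑ j, (hop k 0 j : ℝ)) * M := by
      rw [Finset.sum_mul]
      congr 1; ext j; rw [hconst j]
    rw [this] at hrow0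
    rcases mul_eq_zero.mp hrow0 with h | h
    · linarith
    · exact hne h
  funext j
  simp [hconst j, hM0]

end OddHDM

open Matrix

/-- The hop-distance matrix of the odd cycle `C_{2k+1}` (with entries
`h i j = min(|i-j|, (2k+1)-|i-j|)`) has full rank `2k+1` over the reals. -/
theorem oddCycle_hdm_rank (k : ℕ) (hk : 1 ≤ k) :
    let H : Matrix (Fin (2 * k + 1)) (Fin (2 * k + 1)) ℝ :=
      Matrix.of fun i j =>
        ((min ((i : ℤ) - (j : ℤ)).natAbs ((2 * k + 1) - ((i : ℤ) - (j : ℤ)).natAbs) : ℕ) : ℝ)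
    H.rank = 2 * k + 1 := by
  intro H
  have hHdef : ∀ i j, H i j = ((OddHDM.hop k i j : ℕ) : ℝ) := fun i j => rfl
  have hinj : Function.Injective H.mulVec := by
    have hker : ∀ x, H.mulVec x = 0 → x = 0 := by
      intro x hx0
      apply OddHDM.hop_kernel k hk
      intro i
      have := congrFun hx0 i
      simpa [Matrix.mulVec, dotProduct, hHdef] using this
    intro x y hxy
    have : H.mulVec (x - y) = 0 := by
      rw [Matrix.mulVec_sub, hxy, sub_self]
    have := hker _ this
    exact sub_eq_zero.mp this
  have hu : IsUnit H := Matrix.mulVec_injective_iff_isUnit.mp hinj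
  rw [Matrix.rank_of_isUnit H hu, Fintype.card_fin]
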